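/- (Proposition 1.1 / Corollary 4.2 for circle bundles over compact hyperbolic surfaces: no compact leaves forces global constancy.) Let Γ be a cocompact Fuchsian group acting on the circle S¹ by homeomorphisms, and assume that no point of S¹ has a finite Γ-orbit. Then every Γ-invariant leafwise harmonic function f̃ : 𝔻 × S¹ → ℝ is constant on all of 𝔻 × S¹. -/

import Mathlib

open Metric Set Filter

noncomputable section

/-- The open unit disc in `ℂ`. -/
def unitDisc : Set ℂ := Metric.ball 0 1

/-- A function `f : ℂ → ℝ` is harmonic on a set `U ⊆ ℂ` if, locally on `U`, it is
the real part of a holomorphic function (for open `U` this is equivalent to being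
`C²` with vanishing Laplacian). -/
def HarmonicOnSet (f : ℂ → ℝ) (U : Set ℂ) : Prop :=
  ∀ z ∈ U, ∃ r > 0, Metric.ball z r ⊆ U ∧
    ∃ g : ℂ → ℂ, DifferentiableOn ℂ g (Metric.ball z r) ∧
      ∀ w ∈ Metric.ball z r, f w = (g w).re

/-- `ρ` is a cocompact Fuchsian group action of `Γ` on the open unit disc: a faithful,
properly discontinuous, cocompact action by Möbius transformations
`z ↦ (αz+β)/(β̄z+ᾱ)` with `|α|² - |β|² = 1`. -/
structure IsCocompactFuchsian (Γ : Type*) [Group Γ] (ρ : Γ → ℂ → ℂ) : Prop where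
  one_act : ∀ z ∈ unitDisc, ρ 1 z = z
  mul_act : ∀ γ₁ γ₂ : Γ, ∀ z ∈ unitDisc, ρ (γ₁ * γ₂) z = ρ γ₁ (ρ γ₂ z)
  maps_disc : ∀ γ : Γ, ∀ z ∈ unitDisc, ρ γ z ∈ unitDisc
  moebius : ∀ γ : Γ, ∃ α β : ℂ, ‖α‖ ^ 2 - ‖β‖ ^ 2 = 1 ∧
    ∀ z ∈ unitDisc, ρ γ z = (α * z + β) / ((starRingEnd ℂ) β * z + (starRingEnd ℂ) α)
  faithful : ∀ γ : Γ, (∀ z ∈ unitDisc, ρ γ z = z) → γ = 1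
  properly_discontinuous : ∀ K : Set ℂ, K ⊆ unitDisc → IsCompact K →
    {γ : Γ | ((ρ γ '' K) ∩ K).Nonempty}.Finite
  cocompact : ∃ K : Set ℂ, K ⊆ unitDisc ∧ IsCompact K ∧ ∀ z ∈ unitDisc, ∃ γ : Γ, ρ γ z ∈ K

/-- `σ` is an action of the group `Γ` on the topological space `X` by homeomorphisms. -/
structure IsActionByHomeomorphisms (Γ : Type*) [Group Γ] (X : Type*) [TopologicalSpace X]
    (σ : Γ → X → X) : Prop where
  one_act : ∀ x : X, σ 1 x = x
  mul_act : ∀ γ₁ γ₂ : Γ, ∀ x : X, σ (γ₁ * γ₂) x = σ γ₁ (σ γ₂ x)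
  continuous_act : ∀ γ : Γ, Continuous (σ γ)

/-- The unit circle in `ℂ`, as a topological space. -/
abbrev UnitCircle : Type := ↥(Metric.sphere (0 : ℂ) 1)

/-!
By cocompactness and invariance, `f` attains its maximum `M` and its minimum `m`, and the maximum
principle on the leaf through an extremal point shows that the sets of leaves on which `f ≡ M`,
resp. `f ≡ m`, are nonempty, closed and `Γ`-invariant. Two disjoint such sets `A`, `B` would give a
finite orbit: the components of `S¹ ∖ A` meeting `B` are finitely many open arcs permuted by `Γ`,
and their endpoints form a finite invariant set. Hence the two sets meet and `M = m`.
-/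

open Complex Real Topology

namespace UnitCircle

instance : ConnectedSpace UnitCircle :=
  isConnected_iff_connectedSpace.mp (isConnected_sphere (by simp) 0 zero_le_one)

instance : LocallyConnectedSpace UnitCircle :=
  haveI : Fact (Module.finrank ℝ ℂ = 1 + 1) := ⟨by simp⟩
  ChartedSpace.locallyConnectedSpace (EuclideanSpace ℝ (Fin 1)) UnitCircle

lemma coe_ne_zero (y : UnitCircle) : (y : ℂ) ≠ 0 :=
  norm_ne_zero_iff.mp (by simp)

variable (p : UnitCircle)

/-- Sends `±π` to `p`, so that `(-π, π)` parametrizes `S¹ ∖ {p}`. -/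
def arcParam (t : ℝ) : UnitCircle :=
  ⟨-(p : ℂ) * exp (t * I), by simp [norm_exp_ofReal_mul_I]⟩

def arcCoord (y : UnitCircle) : ℝ := arg (-(y : ℂ) / p)

lemma continuous_arcParam : Continuous (arcParam p) :=
  continuous_const.mul (continuous_ofReal.mul continuous_const).cexp |>.subtype_mk _

lemma arcParam_arcCoord (y : UnitCircle) : arcParam p (arcCoord p y) = y := by
  have hnorm : ‖-(y : ℂ) / p‖ = 1 := by simp
  have h := norm_mul_exp_arg_mul_I (-(y : ℂ) / p)
  rw [hnorm, ofReal_one, one_mul] at h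
  apply Subtype.ext
  simp only [arcParam, arcCoord, h]
  field_simp [coe_ne_zero]

lemma arcParam_pi : arcParam p π = p :=
  Subtype.ext (by simp [arcParam, exp_pi_mul_I])

lemma arcCoord_mem_Icc (y : UnitCircle) : arcCoord p y ∈ Icc (-π) π :=
  Ioc_subset_Icc_self (arg_mem_Ioc _)

lemma continuousAt_arcCoord {y : UnitCircle} (hy : y ≠ p) : ContinuousAt (arcCoord p) y := by
  have hslit : -(y : ℂ) / p ∈ slitPlane := by
    refine mem_slitPlane_iff_arg.mpr ⟨fun h => hy ?_, by simp [coe_ne_zero]⟩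
    rw [← arcParam_arcCoord p y, arcCoord, h, arcParam_pi]
  exact (continuousAt_arg hslit).comp (x := y) (by fun_prop)

/-- `S` is the image under `arcParam p` of an interval, so its frontier consists of the images of
the two endpoints. -/
theorem finite_frontier_of_isPreconnected {S : Set UnitCircle} (hSo : IsOpen S)
    (hS : IsPreconnected S) (hpS : p ∉ S) : (frontier S).Finite := by
  rcases S.eq_empty_or_nonempty with rfl | hne
  · simp
  set I := arcCoord p '' S
  have hI : IsConnected I := ⟨hne.image _, hS.image _ fun y hy =>
    (continuousAt_arcCoord p (ne_of_mem_of_not_mem hy hpS)).continuousWithinAt⟩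
  have hSI : S = arcParam p '' I := by
    rw [image_image]; simp [arcParam_arcCoord]
  have hIb : BddBelow I := ⟨-π, by rintro _ ⟨y, -, rfl⟩; exact (arcCoord_mem_Icc p y).1⟩
  have hIa : BddAbove I := ⟨π, by rintro _ ⟨y, -, rfl⟩; exact (arcCoord_mem_Icc p y).2⟩
  have hclosure : closure S ⊆ arcParam p '' Icc (sInf I) (sSup I) := by
    refine closure_minimal ?_ (isCompact_Icc.image (continuous_arcParam p)).isClosed
    rw [hSI]
    exact image_mono (subset_Icc_csInf_csSup hIb hIa)
  refine ((finite_singleton (arcParam p (sSup I))).insert (arcParam p (sInf I))).subset ?_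
  rw [hSo.frontier_eq]
  rintro _ ⟨hy, hyS⟩
  obtain ⟨t, ht, rfl⟩ := hclosure hy
  have htIoo : t ∉ Ioo (sInf I) (sSup I) := fun h =>
    hyS (hSI ▸ mem_image_of_mem _ (hI.Ioo_csInf_csSup_subset hIb hIa h))
  rcases ht.1.eq_or_lt with h | h
  · exact Or.inl (congrArg _ h.symm)
  · exact Or.inr (congrArg _ (ht.2.eq_of_not_lt fun h' => htIoo ⟨h, h'⟩))

end UnitCircle

namespace IsActionByHomeomorphisms

variable {Γ X : Type*} [Group Γ] [TopologicalSpace X] {σ : Γ → X → X}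

lemma inv_apply_apply (hσ : IsActionByHomeomorphisms Γ X σ) (γ : Γ) (x : X) :
    σ γ⁻¹ (σ γ x) = x := by
  rw [← hσ.mul_act, inv_mul_cancel, hσ.one_act]

lemma apply_inv_apply (hσ : IsActionByHomeomorphisms Γ X σ) (γ : Γ) (x : X) :
    σ γ (σ γ⁻¹ x) = x := by
  rw [← hσ.mul_act, mul_inv_cancel, hσ.one_act]

@[simps]
def toHomeomorph (hσ : IsActionByHomeomorphisms Γ X σ) (γ : Γ) : X ≃ₜ X where
  toFun := σ γ
  invFun := σ γ⁻¹
  left_inv := hσ.inv_apply_apply γ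
  right_inv := hσ.apply_inv_apply γ
  continuous_toFun := hσ.continuous_act γ
  continuous_invFun := hσ.continuous_act γ⁻¹

lemma mapsTo_compl (hσ : IsActionByHomeomorphisms Γ X σ) {A : Set X}
    (hA : ∀ γ, MapsTo (σ γ) A A) (γ : Γ) : MapsTo (σ γ) Aᶜ Aᶜ :=
  fun x hx hγx => hx (hσ.inv_apply_apply γ x ▸ hA γ⁻¹ hγx)

lemma image_eq_of_mapsTo (hσ : IsActionByHomeomorphisms Γ X σ) {U : Set X}
    (hU : ∀ γ, MapsTo (σ γ) U U) (γ : Γ) : σ γ '' U = U :=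
  (hU γ).image_subset.antisymm fun x hx => ⟨σ γ⁻¹ x, hU γ⁻¹ hx, hσ.apply_inv_apply γ x⟩

lemma image_connectedComponentIn (hσ : IsActionByHomeomorphisms Γ X σ) {U : Set X}
    (hU : ∀ γ, MapsTo (σ γ) U U) (γ : Γ) {y : X} (hy : y ∈ U) :
    σ γ '' connectedComponentIn U y = connectedComponentIn U (σ γ y) := by
  simpa [hσ.image_eq_of_mapsTo hU γ] using (hσ.toHomeomorph γ).image_connectedComponentIn hy

/-- If `A` and `B` are disjoint invariant sets, the finitely many components of `Aᶜ` that meet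
the compact set `B` are permuted by `Γ`, so the union of their frontiers is a finite invariant
set; it is nonempty because `X` is connected. -/
theorem exists_finite_orbit_of_disjoint [ConnectedSpace X] [LocallyConnectedSpace X]
    (hσ : IsActionByHomeomorphisms Γ X σ) {A B : Set X} (hAne : A.Nonempty) (hBne : B.Nonempty)
    (hAcl : IsClosed A) (hBc : IsCompact B) (hAinv : ∀ γ, MapsTo (σ γ) A A)
    (hBinv : ∀ γ, MapsTo (σ γ) B B) (hAB : Disjoint A B)
    (hfr : ∀ y ∉ A, (frontier (connectedComponentIn Aᶜ y)).Finite) :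
    ∃ x, (range fun γ => σ γ x).Finite := by
  have hBU : B ⊆ Aᶜ := hAB.subset_compl_left
  have hcomps : (connectedComponentIn Aᶜ '' B).Finite := by
    obtain ⟨t, htB, htfin, hcover⟩ := hBc.elim_finite_subcover_image
      (fun y _ => hAcl.isOpen_compl.connectedComponentIn)
      (fun y hy => mem_iUnion₂.2 ⟨y, hy, mem_connectedComponentIn (hBU hy)⟩)
    refine (htfin.image (connectedComponentIn Aᶜ)).subset ?_
    rintro _ ⟨y, hy, rfl⟩
    obtain ⟨y', hy't, hyy'⟩ := mem_iUnion₂.1 (hcover hy)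
    exact ⟨y', hy't, connectedComponentIn_eq hyy'⟩
  have hF : (⋃ y ∈ B, frontier (connectedComponentIn Aᶜ y)).Finite := by
    rw [← biUnion_image]
    refine hcomps.biUnion ?_
    rintro _ ⟨y, hy, rfl⟩
    exact hfr y (hBU hy)
  obtain ⟨y, hy⟩ := hBne
  obtain ⟨a, ha⟩ := hAne
  obtain ⟨q, hq⟩ : (frontier (connectedComponentIn Aᶜ y)).Nonempty :=
    nonempty_frontier_iff.2 ⟨⟨y, mem_connectedComponentIn (hBU hy)⟩,
      fun h => absurd ha (connectedComponentIn_subset _ _ (h ▸ mem_univ a))⟩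
  refine ⟨q, hF.subset ?_⟩
  rintro _ ⟨γ, rfl⟩
  have hγq : σ γ q ∈ frontier (connectedComponentIn Aᶜ (σ γ y)) := by
    rw [← hσ.image_connectedComponentIn (hσ.mapsTo_compl hAinv) γ (hBU hy)]
    simpa using (hσ.toHomeomorph γ).image_frontier _ ▸ mem_image_of_mem _ hq
  exact mem_iUnion₂.2 ⟨σ γ y, hBinv γ hy, hγq⟩

end IsActionByHomeomorphisms

theorem UnitCircle.inter_nonempty_of_infinite_orbits {Γ : Type*} [Group Γ]
    {σ : Γ → UnitCircle → UnitCircle} (hσ : IsActionByHomeomorphisms Γ UnitCircle σ)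
    (hσinf : ∀ x : UnitCircle, (range fun γ : Γ => σ γ x).Infinite) {A B : Set UnitCircle}
    (hAne : A.Nonempty) (hBne : B.Nonempty) (hAcl : IsClosed A) (hBcl : IsClosed B)
    (hAinv : ∀ γ, MapsTo (σ γ) A A) (hBinv : ∀ γ, MapsTo (σ γ) B B) : (A ∩ B).Nonempty := by
  by_contra hAB
  obtain ⟨p, hp⟩ := hAne
  obtain ⟨x, hx⟩ := hσ.exists_finite_orbit_of_disjoint ⟨p, hp⟩ hBne hAcl hBcl.isCompact hAinv
    hBinv (disjoint_iff_inter_eq_empty.2 (not_nonempty_iff_eq_empty.1 hAB)) fun y _ =>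
      finite_frontier_of_isPreconnected p hAcl.isOpen_compl.connectedComponentIn
        isPreconnected_connectedComponentIn fun hpc => absurd hp (connectedComponentIn_subset _ _ hpc)
  exact hσinf x hx

namespace HarmonicOnSet

variable {f : ℂ → ℝ} {U : Set ℂ}

lemma continuousAt (hf : HarmonicOnSet f U) {z : ℂ} (hz : z ∈ U) : ContinuousAt f z := by
  obtain ⟨r, hr, -, g, hg, hfg⟩ := hf z hz
  have hball := ball_mem_nhds z hr
  exact (continuous_re.continuousAt.comp (hg.continuousOn.continuousAt hball)).congr
    (eventually_of_mem hball fun w hw => (hfg w hw).symm)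

lemma neg (hf : HarmonicOnSet f U) : HarmonicOnSet (fun z => -f z) U := by
  intro z hz
  obtain ⟨r, hr, hrU, g, hg, hfg⟩ := hf z hz
  exact ⟨r, hr, hrU, fun w => -g w, hg.neg, fun w hw => by simp [hfg w hw]⟩

/-- `e^f = ‖e^g‖` for a local holomorphic `g` with `f = Re g`: this is the maximum modulus
principle. -/
lemma eventually_eq_of_isLocalMax (hf : HarmonicOnSet f U) {z : ℂ} (hz : z ∈ U)
    (hmax : IsLocalMax f z) : ∀ᶠ w in 𝓝 z, f w = f z := by
  obtain ⟨r, hr, -, g, hg, hfg⟩ := hf z hz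
  have hball := ball_mem_nhds z hr
  have hnorm : ∀ᶠ w in 𝓝 z, ‖exp (g w)‖ = Real.exp (f w) :=
    eventually_of_mem hball fun w hw => by rw [norm_exp, hfg w hw]
  have hloc : IsLocalMax (norm ∘ fun w => exp (g w)) z := by
    filter_upwards [hmax, hnorm] with w hw hnw
    simpa [hnw, hnorm.self_of_nhds] using hw
  filter_upwards [norm_eventually_eq_of_isLocalMax (hg.cexp.eventually_differentiableAt hball)
    hloc, hnorm] with w hw hnw
  exact Real.exp_injective (hnw.symm.trans (hw.trans hnorm.self_of_nhds))

theorem eqOn_of_isPreconnected_of_isMaxOn (hf : HarmonicOnSet f U) (hU : IsPreconnected U)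
    (hUo : IsOpen U) {c : ℂ} (hcU : c ∈ U) (hm : IsMaxOn f U c) : EqOn f (Function.const ℂ (f c)) U := by
  set V := {z | ∀ᶠ w in 𝓝 z, f w = f c}
  set W := U ∩ {z | f z ≠ f c}
  have hWo : IsOpen W :=
    ContinuousOn.isOpen_inter_preimage (fun z hz => (hf.continuousAt hz).continuousWithinAt)
      hUo isOpen_ne
  have hVW : Disjoint V W := disjoint_left.2 fun z hzV hzW => hzW.2 hzV.self_of_nhds
  have hUVW : U ⊆ V ∪ W := by
    intro z hz
    by_cases hfz : f z = f c
    · have hzmax : IsMaxOn f U z := fun w hw => (hm hw).trans_eq hfz.symm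
      exact Or.inl ((hf.eventually_eq_of_isLocalMax hz (hzmax.isLocalMax (hUo.mem_nhds hz))).mono
        fun w hw => hw.trans hfz)
    · exact Or.inr ⟨hz, hfz⟩
  have hUV := hU.subset_left_of_subset_union isOpen_setOfPred_eventually_nhds hWo hVW hUVW
    ⟨c, hcU, (hUVW hcU).resolve_right fun h => h.2 rfl⟩
  exact fun z hz => (hUV hz).self_of_nhds

end HarmonicOnSet

lemma isOpen_unitDisc : IsOpen unitDisc := isOpen_ball

lemma isPreconnected_unitDisc : IsPreconnected unitDisc := (convex_ball 0 1).isPreconnected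

lemma zero_mem_unitDisc : (0 : ℂ) ∈ unitDisc := mem_ball_self one_pos

def levelLeaves (f : ℂ → UnitCircle → ℝ) (c : ℝ) : Set UnitCircle :=
  {x | ∀ z ∈ unitDisc, f z x = c}

lemma levelLeaves_neg (f : ℂ → UnitCircle → ℝ) (c : ℝ) :
    levelLeaves (fun z x => -f z x) c = levelLeaves f (-c) := by
  ext x
  simp [levelLeaves, neg_eq_iff_eq_neg]

lemma isClosed_levelLeaves {f : ℂ → UnitCircle → ℝ}
    (hf : ContinuousOn (fun p : ℂ × UnitCircle => f p.1 p.2) (unitDisc ×ˢ univ)) (c : ℝ) :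
    IsClosed (levelLeaves f c) := by
  simp only [levelLeaves, ofPred_forall]
  exact isClosed_biInter fun z hz => isClosed_eq
    (hf.comp_continuous (continuous_const.prodMk continuous_id) fun _ => ⟨hz, trivial⟩)
    continuous_const

section Invariant

variable {Γ : Type*} [Group Γ] {ρ : Γ → ℂ → ℂ} {σ : Γ → UnitCircle → UnitCircle}
  {f : ℂ → UnitCircle → ℝ}

lemma mapsTo_levelLeaves (hΓ : IsCocompactFuchsian Γ ρ)
    (hσ : IsActionByHomeomorphisms Γ UnitCircle σ)
    (hinv : ∀ γ : Γ, ∀ z ∈ unitDisc, ∀ x, f (ρ γ z) (σ γ x) = f z x) (γ : Γ) (c : ℝ) :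
    MapsTo (σ γ) (levelLeaves f c) (levelLeaves f c) := fun x hx z hz => by
  rw [← hinv γ⁻¹ z hz, hσ.inv_apply_apply]
  exact hx _ (hΓ.maps_disc _ _ hz)

/-- By cocompactness every value of `f` is attained over a compact fundamental set. -/
lemma exists_forall_le_of_invariant (hΓ : IsCocompactFuchsian Γ ρ)
    (hf : ContinuousOn (fun p : ℂ × UnitCircle => f p.1 p.2) (unitDisc ×ˢ univ))
    (hinv : ∀ γ : Γ, ∀ z ∈ unitDisc, ∀ x, f (ρ γ z) (σ γ x) = f z x) :
    ∃ z₀ ∈ unitDisc, ∃ x₀, ∀ z ∈ unitDisc, ∀ x, f z x ≤ f z₀ x₀ := by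
  obtain ⟨K, hKD, hKc, hcov⟩ := hΓ.cocompact
  obtain ⟨γ, hγ⟩ := hcov 0 zero_mem_unitDisc
  obtain ⟨⟨z₀, x₀⟩, ⟨hz₀, -⟩, hmax⟩ := (hKc.prod isCompact_univ).exists_isMaxOn
    ((nonempty_of_mem hγ).prod univ_nonempty) (hf.mono (prod_mono hKD subset_rfl))
  refine ⟨z₀, hKD hz₀, x₀, fun z hz x => ?_⟩
  obtain ⟨δ, hδ⟩ := hcov z hz
  rw [← hinv δ z hz x]
  exact hmax (mk_mem_prod hδ trivial)

lemma exists_forall_le_and_levelLeaves_nonempty (hΓ : IsCocompactFuchsian Γ ρ)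
    (hf : ContinuousOn (fun p : ℂ × UnitCircle => f p.1 p.2) (unitDisc ×ˢ univ))
    (hharm : ∀ x, HarmonicOnSet (fun z => f z x) unitDisc)
    (hinv : ∀ γ : Γ, ∀ z ∈ unitDisc, ∀ x, f (ρ γ z) (σ γ x) = f z x) :
    ∃ M, (∀ z ∈ unitDisc, ∀ x, f z x ≤ M) ∧ (levelLeaves f M).Nonempty := by
  obtain ⟨z₀, hz₀, x₀, hmax⟩ := exists_forall_le_of_invariant hΓ hf hinv
  exact ⟨f z₀ x₀, hmax, x₀, fun z hz => (hharm x₀).eqOn_of_isPreconnected_of_isMaxOn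
    isPreconnected_unitDisc isOpen_unitDisc hz₀ (fun w hw => hmax w hw x₀) hz⟩

end Invariant

/-- **Proposition 1.1 / Corollary 4.2 for circle bundles.** If a cocompact Fuchsian group
`Γ` acts on the circle by homeomorphisms with no finite orbit, then every `Γ`-invariant
leafwise harmonic function on `𝔻 × S¹` is globally constant. -/
theorem no_compact_leaves_implies_constant
    {Γ : Type*} [Group Γ] (ρ : Γ → ℂ → ℂ) (hΓ : IsCocompactFuchsian Γ ρ)
    (σ : Γ → UnitCircle → UnitCircle) (hσ : IsActionByHomeomorphisms Γ UnitCircle σ)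
    (hnofinite : ∀ x : UnitCircle, (Set.range fun γ : Γ => σ γ x).Infinite)
    (f : ℂ → UnitCircle → ℝ)
    (hcont : ContinuousOn (fun p : ℂ × UnitCircle => f p.1 p.2)
      (unitDisc ×ˢ (univ : Set UnitCircle)))
    (hharm : ∀ x : UnitCircle, HarmonicOnSet (fun z => f z x) unitDisc)
    (hinv : ∀ γ : Γ, ∀ z ∈ unitDisc, ∀ x : UnitCircle, f (ρ γ z) (σ γ x) = f z x) :
    ∀ z ∈ unitDisc, ∀ z' ∈ unitDisc, ∀ x x' : UnitCircle, f z x = f z' x' := by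
  obtain ⟨M, hle, hM⟩ := exists_forall_le_and_levelLeaves_nonempty hΓ hcont hharm hinv
  obtain ⟨m, hge, hm⟩ := exists_forall_le_and_levelLeaves_nonempty (f := fun z x => -f z x) hΓ hcont.neg
    (fun x => (hharm x).neg) fun γ z hz x => by rw [hinv γ z hz x]
  rw [levelLeaves_neg] at hm
  obtain ⟨y, hyM, hym⟩ := UnitCircle.inter_nonempty_of_infinite_orbits hσ hnofinite hM hm
    (isClosed_levelLeaves hcont M) (isClosed_levelLeaves hcont (-m))
    (mapsTo_levelLeaves hΓ hσ hinv · M) (mapsTo_levelLeaves hΓ hσ hinv · (-m))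
  have hMm : M = -m := (hyM 0 zero_mem_unitDisc).symm.trans (hym 0 zero_mem_unitDisc)
  intro z hz z' hz' x x'
  linarith [hle z hz x, hle z' hz' x', hge z hz x, hge z' hz' x']
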